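/- arXiv:0704.2838 — 2 statements merged into one kernel-verified Lean document; each statement's English description precedes it below -/
import Mathlib

section
/- For every a ∈ ℂ∖{0} and every integer k ≥ 0, the element F_k(a) lies in the subring K of R generated by the elements F_1(b) = Z_b + Z_{−bq}Z_{bq²}^{-1} + Z_{−bq³}^{-1}, b ∈ ℂ∖{0}. (The twisted q-character of each Kirillov–Reshetikhin module of type A_2^{(2)} is a polynomial with integer coefficients in the twisted q-characters of the fundamental representations.) -/
noncomputable section

/-- Monomials: the free abelian group on `ℂˣ` written additively;
`Finsupp.single a 1` corresponds to the generator `Z_a`. -/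
abbrev Mon : Type := ℂˣ →₀ ℤ

/-- The group ring `R = ℤ[G]`, i.e. Laurent polynomials in the variables `Z_a`. -/
abbrev LR : Type := AddMonoidAlgebra ℤ Mon

/-- The generator `Z_a` of the free abelian group of monomials. -/
def Z (a : ℂˣ) : Mon := Finsupp.single a 1

/-- `A_a = Z_{aq} · Z_{aq⁻¹} · Z_{-a}⁻¹` (written additively). -/
def A (q a : ℂˣ) : Mon := Z (a * q) + Z (a * q⁻¹) - Z (-a)

/-- The monomial `m_{k,a} = ∏_{s=1}^{k} Z_{a q^{2s-2}}` (written additively). -/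
def mKR (q : ℂˣ) (k : ℕ) (a : ℂˣ) : Mon := ∑ s ∈ Finset.range k, Z (a * q ^ (2 * s))

/-- The twisted q-character `F_k(a)` of the Kirillov-Reshetikhin module `W_{k,a}`
of type `A₂⁽²⁾`, as an element of the group ring `ℤ[G]`. -/
def FKR (q : ℂˣ) (k : ℕ) (a : ℂˣ) : LR :=
  ∑ R ∈ Finset.range (k + 1), ∑ R' ∈ Finset.range (R + 1),
    AddMonoidAlgebra.single
      (mKR q k a
        - ∑ r ∈ Finset.range R, A q (a * q ^ (2 * (k : ℤ) + 1 - 2 * ((r : ℤ) + 1)))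
        - ∑ r' ∈ Finset.range R', A q (-(a * q ^ (2 * (k : ℤ) + 2 - 2 * ((r' : ℤ) + 1))))) 1

/-- The twisted q-character of the fundamental representation:
`F₁(b) = Z_b + Z_{-bq} Z_{bq²}⁻¹ + Z_{-bq³}⁻¹`. -/
def F1 (q b : ℂˣ) : LR :=
  AddMonoidAlgebra.single (Z b) 1
    + AddMonoidAlgebra.single (Z (-(b * q)) - Z (b * q ^ 2)) 1
    + AddMonoidAlgebra.single (-Z (-(b * q ^ 3))) 1

/-- The subring `K ⊆ R` generated by the twisted q-characters of the fundamental
representations of the twisted quantum loop algebra of type `A₂⁽²⁾`. -/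
def Ksub (q : ℂˣ) : Subring LR := Subring.closure (Set.range fun b : ℂˣ => F1 q b)

/-!
Write `F_k(a) = m_{k,a} · S_k(a)`, with `S_k(a)` the double sum of products of the `A⁻¹`.
Put `x_j = A⁻¹_{a q^{2k+3-2j}}` and `y_j = A⁻¹_{-a q^{2k+4-2j}}`: then `S_{k+2}`, `S_{k+1}`,
`S_k`, `S_{k-1}` are one and the same nested sum in `x, y`, started at the offsets `0, 1, 2, 3`
(`xSeq`, `ySeq` with `c = 2k+3`). A polynomial
identity between these nested sums, multiplied by `m_{k+2,a}`, becomes the T-system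
`F_1(a q^{2k+2}) F_{k+1}(a) = F_{k+2}(a) + F_1(-a q^{2k+1}) F_k(a) - F_{k-1}(a)`,
which expresses `F_{k+2}(a)` through values of `F_1` and lower `F_j(a)`; induction on `k` from
`F_0(a) = 1` and `F_1(a)` concludes.
-/

open Finset

section NestedProdSum

variable {S : Type*} [CommRing S] (x y : ℕ → S)

def nestedProdSum (o n : ℕ) : S :=
  ∑ R ∈ range n, (∏ i ∈ range R, x (o + i)) * ∑ R' ∈ range (R + 1), ∏ i ∈ range R', y (o + i)

lemma prod_range_succ_offset (o n : ℕ) :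
    ∏ i ∈ range (n + 1), x (o + i) = x o * ∏ i ∈ range n, x (o + 1 + i) := by
  rw [prod_range_succ', add_zero, mul_comm]
  simp only [add_right_comm o, add_assoc]

lemma sum_prod_range_succ_offset (o n : ℕ) :
    ∑ R ∈ range (n + 2), ∏ i ∈ range R, y (o + i)
      = 1 + y o * ∑ R ∈ range (n + 1), ∏ i ∈ range R, y (o + 1 + i) := by
  rw [sum_range_succ', prod_range_zero, add_comm, mul_sum]
  simp only [prod_range_succ_offset]

lemma nestedProdSum_succ (o n : ℕ) :
    nestedProdSum x y o (n + 1) = nestedProdSum x y o n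
      + (∏ i ∈ range n, x (o + i)) * ∑ R' ∈ range (n + 1), ∏ i ∈ range R', y (o + i) :=
  sum_range_succ _ _

lemma nestedProdSum_recurrence (n : ℕ) :
    (1 + x 0 + x 0 * y 0) * nestedProdSum x y 1 (n + 2)
      = nestedProdSum x y 0 (n + 3) + x 1 * (1 + y 1 + y 1 * x 0) * nestedProdSum x y 2 (n + 1)
        - x 1 * x 2 * y 2 * nestedProdSum x y 3 n := by
  induction n with
  | zero =>
    simp only [nestedProdSum, sum_range_succ, prod_range_succ, sum_range_zero, prod_range_zero,
      add_zero]
    ring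
  | succ n ih =>
    rw [nestedProdSum_succ x y 1 (n + 2), nestedProdSum_succ x y 0 (n + 3),
      nestedProdSum_succ x y 2 (n + 1), nestedProdSum_succ x y 3 n]
    simp only [prod_range_succ_offset, sum_prod_range_succ_offset, Nat.reduceAdd]
    linear_combination ih

end NestedProdSum

def mono (m : Mon) : LR := AddMonoidAlgebra.single m 1

lemma mono_zero : mono 0 = 1 := rfl

lemma mono_add (m m' : Mon) : mono (m + m') = mono m * mono m' := by
  simp [mono, AddMonoidAlgebra.single_mul_single]

lemma mono_sum {ι : Type*} (s : Finset ι) (f : ι → Mon) :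
    mono (∑ i ∈ s, f i) = ∏ i ∈ s, mono (f i) :=
  map_prod (AddMonoidAlgebra.of ℤ Mon) (fun i => Multiplicative.ofAdd (f i)) s

section TSystem

variable (q a : ℂˣ)

lemma A_mul_zpow (e : ℤ) :
    A q (a * q ^ e) = Z (a * q ^ (e + 1)) + Z (a * q ^ (e - 1)) - Z (-(a * q ^ e)) := by
  rw [A, mul_assoc, mul_assoc, ← zpow_add_one, ← zpow_sub_one]

lemma A_neg_mul_zpow (e : ℤ) :
    A q (-(a * q ^ e)) = Z (-(a * q ^ (e + 1))) + Z (-(a * q ^ (e - 1))) - Z (a * q ^ e) := by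
  rw [A, neg_mul, neg_mul, neg_neg, mul_assoc, mul_assoc, ← zpow_add_one, ← zpow_sub_one]

lemma mKR_succ (k : ℕ) : mKR q (k + 1) a = mKR q k a + Z (a * q ^ (2 * (k : ℤ))) := by
  rw [mKR, sum_range_succ, ← zpow_natCast]
  push_cast
  rfl

lemma F1_eq_mono_mul (b : ℂˣ) :
    F1 q b = mono (Z b)
      * (1 + mono (-A q (b * q)) + mono (-A q (b * q)) * mono (-A q (-(b * q ^ 2)))) := by
  have h₁ : Z b + -A q (b * q) = Z (-(b * q)) - Z (b * q ^ 2) := by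
    rw [A, mul_inv_cancel_right, mul_assoc, ← sq]
    abel
  have h₂ : Z (-(b * q)) - Z (b * q ^ 2) + -A q (-(b * q ^ 2)) = -Z (-(b * q ^ 3)) := by
    rw [A, neg_neg, neg_mul, neg_mul, mul_assoc, ← pow_succ, sq, ← mul_assoc, mul_inv_cancel_right]
    abel
  rw [mul_add, mul_add, mul_one, ← mono_add, ← mul_assoc, ← mono_add, ← mono_add, h₁, h₂]
  rfl

lemma F1_mul_zpow (e : ℤ) :
    F1 q (a * q ^ e) = mono (Z (a * q ^ e)) * (1 + mono (-A q (a * q ^ (e + 1)))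
      + mono (-A q (a * q ^ (e + 1))) * mono (-A q (-(a * q ^ (e + 2))))) := by
  rw [F1_eq_mono_mul, mul_assoc, ← zpow_add_one, mul_assoc, ← zpow_natCast, ← zpow_add]
  rfl

lemma F1_neg_mul_zpow (e : ℤ) :
    F1 q (-(a * q ^ e)) = mono (Z (-(a * q ^ e))) * (1 + mono (-A q (-(a * q ^ (e + 1))))
      + mono (-A q (-(a * q ^ (e + 1)))) * mono (-A q (a * q ^ (e + 2)))) := by
  rw [F1_eq_mono_mul, neg_mul, neg_mul, neg_neg, mul_assoc, ← zpow_add_one, mul_assoc,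
    ← zpow_natCast, ← zpow_add]
  rfl

def xSeq (c : ℤ) (j : ℕ) : LR := mono (-A q (a * q ^ (c - 2 * j)))

def ySeq (c : ℤ) (j : ℕ) : LR := mono (-A q (-(a * q ^ (c + 1 - 2 * j))))

lemma FKR_eq_mono_mul_nestedProdSum (k o : ℕ) (c : ℤ) (hc : 2 * ((o : ℤ) + k) - 1 = c) :
    FKR q k a = mono (mKR q k a) * nestedProdSum (xSeq q a c) (ySeq q a c) o (k + 1) := by
  subst hc
  simp only [FKR, nestedProdSum, ← mono.eq_1, sub_eq_add_neg, ← sum_neg_distrib, mono_add,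
    mono_sum, mul_sum, xSeq, ySeq]
  push_cast
  ring_nf

lemma FKR_zero : FKR q 0 a = 1 := by
  simp [FKR, mKR, ← mono.eq_1, mono_zero]

lemma FKR_one : FKR q 1 a = F1 q a := by
  rw [FKR_eq_mono_mul_nestedProdSum q a 1 0 1 (by norm_num), F1_eq_mono_mul,
    show mKR q 1 a = Z a by simp [mKR]]
  congr 1
  simp only [nestedProdSum, sum_range_succ, prod_range_succ, sum_range_zero, prod_range_zero,
    add_zero, xSeq, ySeq]
  norm_num
  ring

lemma FKR_eq_tail (n : ℕ) (c : ℤ) (hc : 2 * (n : ℤ) + 5 = c) :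
    FKR q n a = mono (mKR q (n + 3) a) * xSeq q a c 1 * xSeq q a c 2 * ySeq q a c 2
      * nestedProdSum (xSeq q a c) (ySeq q a c) 3 (n + 1) := by
  rw [FKR_eq_mono_mul_nestedProdSum q a n 3 c (by rw [← hc]; ring)]
  congr 1
  simp only [xSeq, ySeq, ← mono_add, mKR_succ, ← hc, A_mul_zpow, A_neg_mul_zpow]
  push_cast
  ring_nf
  abel_nf

theorem F1_mul_FKR_succ (k : ℕ) :
    F1 q (a * q ^ (2 * (k : ℤ) + 2)) * FKR q (k + 1) a
      = FKR q (k + 2) a + F1 q (-(a * q ^ (2 * (k : ℤ) + 1))) * FKR q k a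
        - if k = 0 then 0 else FKR q (k - 1) a := by
  set x := xSeq q a (2 * k + 3)
  set y := ySeq q a (2 * k + 3)
  have hF1 : F1 q (a * q ^ (2 * (k : ℤ) + 2))
      = mono (Z (a * q ^ (2 * (k : ℤ) + 2))) * (1 + x 0 + x 0 * y 0) := by
    rw [F1_mul_zpow]
    simp only [x, y, xSeq, ySeq]
    ring_nf
  have hF1' : F1 q (-(a * q ^ (2 * (k : ℤ) + 1)))
      = mono (Z (-(a * q ^ (2 * (k : ℤ) + 1)))) * (1 + y 1 + y 1 * x 0) := by
    rw [F1_neg_mul_zpow]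
    simp only [x, y, xSeq, ySeq]
    ring_nf
  have hm : mono (Z (a * q ^ (2 * (k : ℤ) + 2))) * mono (mKR q (k + 1) a)
      = mono (mKR q (k + 2) a) := by
    simp only [← mono_add, mKR_succ]
    push_cast
    ring_nf
    abel_nf
  have hm' : mono (Z (-(a * q ^ (2 * (k : ℤ) + 1)))) * mono (mKR q k a)
      = mono (mKR q (k + 2) a) * x 1 := by
    simp only [x, xSeq, ← mono_add, mKR_succ, A_mul_zpow]
    push_cast
    ring_nf
    abel_nf
  have htail : (if k = 0 then 0 else FKR q (k - 1) a)
      = mono (mKR q (k + 2) a) * x 1 * x 2 * y 2 * nestedProdSum x y 3 k := by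
    cases k with
    | zero => simp [nestedProdSum]
    | succ n => exact FKR_eq_tail q a n _ (by push_cast; ring)
  rw [FKR_eq_mono_mul_nestedProdSum q a (k + 1) 1 (2 * k + 3) (by push_cast; ring),
    FKR_eq_mono_mul_nestedProdSum q a (k + 2) 0 (2 * k + 3) (by push_cast; ring),
    FKR_eq_mono_mul_nestedProdSum q a k 2 (2 * k + 3) (by push_cast; ring), htail, hF1, hF1']
  linear_combination (1 + x 0 + x 0 * y 0) * nestedProdSum x y 1 (k + 2) * hm
    + mono (mKR q (k + 2) a) * nestedProdSum_recurrence x y k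
    - (1 + y 1 + y 1 * x 0) * nestedProdSum x y 2 (k + 1) * hm'

end TSystem

lemma F1_mem_Ksub (q b : ℂˣ) : F1 q b ∈ Ksub q :=
  Subring.subset_closure ⟨b, rfl⟩

theorem FKR_mem_Ksub_general (q : ℂˣ)
    (a : ℂˣ) (k : ℕ) :
    FKR q k a ∈ Ksub q := by
  induction k using Nat.strong_induction_on with
  | _ k ih =>
    exact match k, ih with
    | 0, _ => by rw [FKR_zero]; exact one_mem _
    | 1, _ => by rw [FKR_one]; exact F1_mem_Ksub q a
    | k + 2, ih => by
      have hrec : FKR q (k + 2) a = F1 q (a * q ^ (2 * (k : ℤ) + 2)) * FKR q (k + 1) a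
          - F1 q (-(a * q ^ (2 * (k : ℤ) + 1))) * FKR q k a
          + if k = 0 then 0 else FKR q (k - 1) a := by
        linear_combination -F1_mul_FKR_succ q a k
      rw [hrec]
      refine add_mem (sub_mem (mul_mem (F1_mem_Ksub q _) (ih _ (by omega)))
        (mul_mem (F1_mem_Ksub q _) (ih _ (by omega)))) ?_
      split_ifs
      · exact zero_mem _
      · exact ih _ (by omega)

/-- The twisted q-character `F_k(a)` of each Kirillov–Reshetikhin module of type `A₂⁽²⁾`
is a polynomial with integer coefficients in the twisted q-characters of the
fundamental representations. -/
theorem FKR_mem_Ksub (q : ℂˣ) (hq : ∀ n : ℕ, 0 < n → (q : ℂ) ^ n ≠ 1)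
    (a : ℂˣ) (k : ℕ) :
    FKR q k a ∈ Ksub q :=
  FKR_mem_Ksub_general q a k
end
end

section
/- Let k ≥ 1, T ∈ Tab(2,k), a ∈ ℂ∖{0}, and let (i,p) ≠ (i',p') be two positions with 1 ≤ i ≤ i' ≤ 2 and 1 ≤ p, p' ≤ k; set α = T_{i,p} and β = T_{i',p'}. If there exists (l,b) ∈ {1,2}×(ℂ∖{0}) with z_{l,b}(⟦α⟧_{aq^{2(p−i)}}) > 0 and z_{l,b}(⟦β⟧_{aq^{2(p'−i')}}) > 0 (the positive parts of the two boxes share a variable), then i = 1, i' = 2, and one of the following holds: (i) p = p' and (α,β) = (2,3̄), and the shared variable is of the form Z_{2,c}; (ii) p = p'+1 and (α,β) = (1,2̄), and the shared variable is of the form Z_{1,c}; (iii) p' = p+1, α = 3 and β ∈ {4,4̄}, and the shared variable is of the form Z_{1,c}. -/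
noncomputable section

/-- The set `B = {1,2,3,4,4̄,3̄,2̄,1̄}`. -/
inductive BB : Type
  | b1 | b2 | b3 | b4 | b4' | b3' | b2' | b1'
  deriving DecidableEq

instance : Fintype BB where
  elems := {.b1, .b2, .b3, .b4, .b4', .b3', .b2', .b1'}
  complete := by intro x; cases x <;> decide

/-- The rank used to define the partial order on `B`
(`4` and `4̄` get the same rank, making them incomparable). -/
def BB.rank : BB → ℕ
  | .b1 => 0 | .b2 => 1 | .b3 => 2 | .b4 => 3 | .b4' => 3
  | .b3' => 4 | .b2' => 5 | .b1' => 6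

/-- The partial order `⪯` on `B` : `1 ≺ 2 ≺ 3 ≺ 4 ≺ 3̄ ≺ 2̄ ≺ 1̄` and `3 ≺ 4̄ ≺ 3̄`,
with `4` and `4̄` incomparable. -/
def BB.le (x y : BB) : Prop := x = y ∨ x.rank < y.rank

/-- The strict order `≺` on `B`. -/
def BB.lt (x y : BB) : Prop := x.rank < y.rank

/-- Monomials: the free abelian group on `{1,2} × ℂˣ`, written additively;
`Finsupp.single (i,b) 1` corresponds to the generator `Z_{i+1,b}`. -/
abbrev Mon2 : Type := (Fin 2 × ℂˣ) →₀ ℤ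

/-- The group ring `ℤ[G]`. -/
abbrev LR2 : Type := AddMonoidAlgebra ℤ Mon2

/-- The generator `Z_{i,b}` (with `i : Fin 2` indexing `{1,2}`). -/
def Zv (i : Fin 2) (b : ℂˣ) : Mon2 := Finsupp.single (i, b) 1

/-- `j = e^{2iπ/3}`, a primitive cube root of unity, as a unit of `ℂ`. -/
def jC : ℂˣ := Units.mk0 (Complex.exp (2 * Real.pi * Complex.I / 3)) (Complex.exp_ne_zero _)

/-- The boxes `⟦α⟧_a ∈ G` for `α ∈ B` (written additively). -/
def box (q : ℂˣ) : BB → ℂˣ → Mon2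
  | .b1, a => Zv 0 a
  | .b2, a => -Zv 0 (a * q ^ 2) + Zv 1 (a ^ 3 * q ^ 3)
  | .b3, a => -Zv 1 (a ^ 3 * q ^ 9) + Zv 0 (a * q ^ 2 * jC) + Zv 0 (a * q ^ 2 * jC ^ 2)
  | .b4, a => Zv 0 (a * q ^ 2 * jC) - Zv 0 (a * q ^ 4 * jC ^ 2)
  | .b4', a => Zv 0 (a * q ^ 2 * jC ^ 2) - Zv 0 (a * q ^ 4 * jC)
  | .b3', a => -Zv 0 (a * q ^ 4 * jC) - Zv 0 (a * q ^ 4 * jC ^ 2) + Zv 1 (a ^ 3 * q ^ 9)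
  | .b2', a => Zv 0 (a * q ^ 4) - Zv 1 (a ^ 3 * q ^ 15)
  | .b1', a => -Zv 0 (a * q ^ 6)

/-- `Tab(1,k)`: sequences `(T_1,…,T_k)` in `B` with `T_p ⪯ T_{p+1}`. -/
def IsTab1 (k : ℕ) (T : Fin k → BB) : Prop :=
  ∀ (p : ℕ) (h : p + 1 < k), BB.le (T ⟨p, Nat.lt_of_succ_lt h⟩) (T ⟨p + 1, h⟩)

/-- The monomial `m^{(1)}_{T,a} = ∏_{p=1}^{k} ⟦T_p⟧_{aq^{2(p-1)}}` (written additively). -/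
def m1 (q : ℂˣ) {k : ℕ} (T : Fin k → BB) (a : ℂˣ) : Mon2 :=
  ∑ p : Fin k, box q (T p) (a * q ^ (2 * (p : ℕ)))

/-- `Tab(2,k)`: two-row arrays with entries in `B` satisfying (θ1)–(θ4).
Row `i : Fin 2` corresponds to row `i+1` of the paper. -/
def IsTab2 (k : ℕ) (T : Fin 2 → Fin k → BB) : Prop :=
  (∀ i : Fin 2, IsTab1 k (T i)) ∧
  (∀ p : Fin k, ¬ BB.le (T 1 p) (T 0 p)) ∧
  (¬ ∃ p p' : Fin k, p < p' ∧
      (∀ r : Fin k, p ≤ r → r < p' → T 0 r = BB.b3) ∧ T 0 p' = BB.b4 ∧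
      T 1 p = BB.b4 ∧ (∀ r : Fin k, p < r → r ≤ p' → T 1 r = BB.b3')) ∧
  (¬ ∃ p p' : Fin k, p < p' ∧
      (∀ r : Fin k, p ≤ r → r < p' → T 0 r = BB.b3) ∧ T 0 p' = BB.b4' ∧
      T 1 p = BB.b4' ∧ (∀ r : Fin k, p < r → r ≤ p' → T 1 r = BB.b3'))

/-- The monomial `m^{(2)}_{T,a} = ∏_{i∈{1,2}} ∏_{p=1}^{k} ⟦T_{i,p}⟧_{aq^{2(p-i)}}`
(written additively; rows and columns are 0-indexed). -/
def m2 (q : ℂˣ) {k : ℕ} (T : Fin 2 → Fin k → BB) (a : ℂˣ) : Mon2 :=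
  ∑ i : Fin 2, ∑ p : Fin k, box q (T i p) (a * q ^ (2 * ((p : ℤ) - (i : ℤ))))

/-
The positive variables of `⟦α⟧_c` are `Z_{1, c q^e j^f}` and `Z_{2, c³ q^e}` for a few exponents
depending only on `α`. Since `q` is not a root of unity and `j³ = 1`,
two such variables coincide only if their `q`-exponents agree (and their `j`-exponents too), a
linear relation between the columns and the table exponents. The table exponents are monotone for
`⪯`, so along a row of a tableau the total exponent strictly increases and no variable is shared
within a row. Between the two rows, row monotonicity and column strictness (θ2) leave only the
three listed configurations, a finite check.
-/

instance : PartialOrder BB where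
  le := BB.le
  lt := BB.lt
  le_refl _ := Or.inl rfl
  le_trans x y z := by
    rintro (rfl | hxy) (rfl | hyz)
    exacts [Or.inl rfl, Or.inr hyz, Or.inr hxy, Or.inr (hxy.trans hyz)]
  lt_iff_le_not_ge x y := by
    change x.rank < y.rank ↔ (x = y ∨ _) ∧ ¬(y = x ∨ _)
    constructor
    · intro h
      exact ⟨Or.inr h, by rintro (rfl | h') <;> omega⟩
    · rintro ⟨rfl | h, h'⟩
      exacts [(h' (Or.inl rfl)).elim, h]
  le_antisymm x y := by
    rintro (rfl | hxy) (h | hyx)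
    exacts [rfl, rfl, h.symm, absurd (hxy.trans hyx) (lt_irrefl _)]

instance : DecidableRel ((· ≤ ·) : BB → BB → Prop) :=
  fun x y => inferInstanceAs (Decidable (x = y ∨ x.rank < y.rank))

lemma IsTab1.monotone {k : ℕ} {R : Fin k → BB} (hR : IsTab1 k R) : Monotone R := by
  cases k with
  | zero => exact fun p => p.elim0
  | succ n => exact Fin.monotone_iff_le_succ.2 fun p => hR p (by omega)

lemma IsTab2.monotone {k : ℕ} {T : Fin 2 → Fin k → BB} (hT : IsTab2 k T) (r : Fin 2) :
    Monotone (T r) :=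
  (hT.1 r).monotone

lemma IsTab2.not_le_of_le {k : ℕ} {T : Fin 2 → Fin k → BB} (hT : IsTab2 k T) {p p' : Fin k}
    (hp : p ≤ p') : ¬ T 1 p' ≤ T 0 p :=
  fun h => hT.2.1 p ((hT.monotone 1 hp).trans h)

/-- The exponents `(e, f)` of the variables `Z_{1, c q^e j^f}` occurring positively in `⟦α⟧_c`. -/
def posZ1 : BB → Finset (ℕ × ℕ)
  | .b1 => {(0, 0)}
  | .b3 => {(2, 1), (2, 2)}
  | .b4 => {(2, 1)}
  | .b4' => {(2, 2)}
  | .b2' => {(4, 0)}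
  | _ => ∅

/-- The exponents `e` of the variables `Z_{2, c³ q^e}` occurring positively in `⟦α⟧_c`. -/
def posZ2 : BB → Finset ℕ
  | .b2 => {3}
  | .b3' => {9}
  | _ => ∅

lemma mem_posZ_of_box_pos {q c b : ℂˣ} {α : BB} {l : Fin 2} (h : 0 < box q α c (l, b)) :
    (l = 0 ∧ ∃ x ∈ posZ1 α, b = c * q ^ x.1 * jC ^ x.2) ∨
      (l = 1 ∧ ∃ e ∈ posZ2 α, b = c ^ 3 * q ^ e) := by
  cases α <;> simp only [box, Zv, Finsupp.coe_add, Finsupp.coe_neg, Finsupp.coe_sub, Pi.add_apply,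
    Pi.neg_apply, Pi.sub_apply, Finsupp.single_apply, Prod.mk.injEq] at h <;>
    split_ifs at h <;> first | omega | simp_all [posZ1, posZ2]

lemma posZ1_snd_lt_three {α : BB} {x : ℕ × ℕ} (hx : x ∈ posZ1 α) : x.2 < 3 := by
  have key : ∀ α, ∀ x ∈ posZ1 α, x.2 < 3 := by decide
  exact key α x hx

lemma posZ1_fst_mono {α β : BB} (h : α ≤ β) {x y : ℕ × ℕ} (hx : x ∈ posZ1 α)
    (hy : y ∈ posZ1 β) : x.1 ≤ y.1 := by
  have key : ∀ α β, ∀ x ∈ posZ1 α, ∀ y ∈ posZ1 β, α ≤ β → x.1 ≤ y.1 := by decide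
  exact key α β x hx y hy h

lemma posZ2_mono {α β : BB} (h : α ≤ β) {e e' : ℕ} (he : e ∈ posZ2 α) (he' : e' ∈ posZ2 β) :
    e ≤ e' := by
  have key : ∀ α β, ∀ e ∈ posZ2 α, ∀ e' ∈ posZ2 β, α ≤ β → e ≤ e' := by decide
  exact key α β e he e' he' h

lemma posZ1_cross_rows {α β : BB} {x y : ℕ × ℕ} (hx : x ∈ posZ1 α) (hy : y ∈ posZ1 β)
    (hf : x.2 = y.2) (h : y.1 ≤ x.1 + 2 → ¬ β ≤ α) :
    (y.1 = x.1 + 4 ∧ α = .b1 ∧ β = .b2') ∨ (y.1 = x.1 ∧ α = .b3 ∧ (β = .b4 ∨ β = .b4')) := by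
  have key : ∀ α β, ∀ x ∈ posZ1 α, ∀ y ∈ posZ1 β, x.2 = y.2 → (y.1 ≤ x.1 + 2 → ¬ β ≤ α) →
      (y.1 = x.1 + 4 ∧ α = .b1 ∧ β = .b2') ∨ (y.1 = x.1 ∧ α = .b3 ∧ (β = .b4 ∨ β = .b4')) := by
    decide
  exact key α β x hx y hy hf h

lemma posZ2_cross_rows {α β : BB} {e e' : ℕ} (he : e ∈ posZ2 α) (he' : e' ∈ posZ2 β)
    (h : e' ≤ e + 6 → ¬ β ≤ α) : e' = e + 6 ∧ α = .b2 ∧ β = .b3' := by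
  have key : ∀ α β, ∀ e ∈ posZ2 α, ∀ e' ∈ posZ2 β, (e' ≤ e + 6 → ¬ β ≤ α) →
      e' = e + 6 ∧ α = .b2 ∧ β = .b3' := by
    decide
  exact key α β e he e' he' h

lemma zpow_injective_of_pow_ne_one {q : ℂˣ} (hq : ∀ n : ℕ, 0 < n → (q : ℂ) ^ n ≠ 1) :
    Function.Injective (q ^ · : ℤ → ℂˣ) := by
  refine injective_zpow_iff_not_isOfFinOrder.2 fun hfin => ?_
  obtain ⟨n, hn, hqn⟩ := isOfFinOrder_iff_pow_eq_one.1 hfin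
  exact hq n hn (by simpa using congrArg Units.val hqn)

lemma jC_isPrimitiveRoot : IsPrimitiveRoot jC 3 :=
  IsPrimitiveRoot.coe_units_iff.1 (by simpa [jC] using Complex.isPrimitiveRoot_exp 3 (by norm_num))

lemma mul_jC_pow_cube (u : ℂˣ) (f : ℕ) : (u * jC ^ f) ^ 3 = u ^ 3 := by
  rw [mul_pow, ← pow_mul, mul_comm f, pow_mul, jC_isPrimitiveRoot.pow_eq_one, one_pow, mul_one]

lemma exponents_eq_of_Z1_args_eq {q : ℂˣ} (hq : ∀ n : ℕ, 0 < n → (q : ℂ) ^ n ≠ 1) (a : ℂˣ)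
    {z z' : ℤ} {x y : ℕ × ℕ} (hx : x.2 < 3) (hy : y.2 < 3)
    (h : a * q ^ z * q ^ x.1 * jC ^ x.2 = a * q ^ z' * q ^ y.1 * jC ^ y.2) :
    z + x.1 = z' + y.1 ∧ x.2 = y.2 := by
  have hu (n : ℤ) (e : ℕ) : a * q ^ n * q ^ e = a * q ^ (n + e) := by
    rw [zpow_add, zpow_natCast, mul_assoc]
  rw [hu, hu, mul_assoc, mul_assoc, mul_right_inj] at h
  have hcube := congrArg (· ^ 3) h
  simp only [mul_jC_pow_cube] at hcube
  rw [← zpow_natCast, ← zpow_natCast, ← zpow_mul, ← zpow_mul] at hcube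
  have hexp : z + x.1 = z' + y.1 := by
    have := zpow_injective_of_pow_ne_one hq hcube
    omega
  rw [hexp, mul_right_inj] at h
  exact ⟨hexp, jC_isPrimitiveRoot.pow_inj hx hy h⟩

lemma exponent_eq_of_Z2_args_eq {q : ℂˣ} (hq : ∀ n : ℕ, 0 < n → (q : ℂ) ^ n ≠ 1) (a : ℂˣ)
    {z z' : ℤ} {e e' : ℕ} (h : (a * q ^ z) ^ 3 * q ^ e = (a * q ^ z') ^ 3 * q ^ e') :
    3 * z + e = 3 * z' + e' := by
  have hu (n : ℤ) (e : ℕ) : (a * q ^ n) ^ 3 * q ^ e = a ^ 3 * q ^ (3 * n + e) := by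
    rw [zpow_add, zpow_natCast, mul_pow, mul_assoc, ← zpow_natCast (q ^ n), ← zpow_mul,
      mul_comm n]
    rfl
  rw [hu, hu, mul_right_inj] at h
  exact zpow_injective_of_pow_ne_one hq h

namespace IsTab2

variable {k : ℕ} {T : Fin 2 → Fin k → BB} {i i' : Fin 2} {p p' : Fin k}

lemma shared_Z1_cases (hT : IsTab2 k T) (hii : i ≤ i') (hne : (i, p) ≠ (i', p'))
    {x y : ℕ × ℕ} (hx : x ∈ posZ1 (T i p)) (hy : y ∈ posZ1 (T i' p'))
    (hz : 2 * ((p : ℤ) - (i : ℤ)) + x.1 = 2 * ((p' : ℤ) - (i' : ℤ)) + y.1) (hf : x.2 = y.2) :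
    i = 0 ∧ i' = 1 ∧
      (((p : ℕ) = p' + 1 ∧ T i p = .b1 ∧ T i' p' = .b2') ∨
        ((p' : ℕ) = p + 1 ∧ T i p = .b3 ∧ (T i' p' = .b4 ∨ T i' p' = .b4'))) := by
  rcases hii.lt_or_eq with hlt | rfl
  · obtain ⟨rfl, rfl⟩ : i = 0 ∧ i' = 1 := by omega
    refine ⟨rfl, rfl, ?_⟩
    simp only [Fin.val_zero, Fin.val_one, Nat.cast_zero, Nat.cast_one] at hz
    rcases posZ1_cross_rows hx hy hf fun hle => hT.not_le_of_le (by omega) with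
      ⟨he, hα, hβ⟩ | ⟨he, hα, hβ⟩
    · exact Or.inl ⟨by omega, hα, hβ⟩
    · exact Or.inr ⟨by omega, hα, hβ⟩
  · refine (hne ?_).elim
    suffices p = p' by rw [this]
    rcases le_total p p' with hp | hp
    · have := posZ1_fst_mono (hT.monotone i hp) hx hy
      omega
    · have := posZ1_fst_mono (hT.monotone i hp) hy hx
      omega

lemma shared_Z2_cases (hT : IsTab2 k T) (hii : i ≤ i') (hne : (i, p) ≠ (i', p')) {e e' : ℕ}
    (he : e ∈ posZ2 (T i p)) (he' : e' ∈ posZ2 (T i' p'))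
    (hz : 3 * (2 * ((p : ℤ) - (i : ℤ))) + e = 3 * (2 * ((p' : ℤ) - (i' : ℤ))) + e') :
    i = 0 ∧ i' = 1 ∧ p = p' ∧ T i p = .b2 ∧ T i' p' = .b3' := by
  rcases hii.lt_or_eq with hlt | rfl
  · obtain ⟨rfl, rfl⟩ : i = 0 ∧ i' = 1 := by omega
    simp only [Fin.val_zero, Fin.val_one, Nat.cast_zero, Nat.cast_one] at hz
    obtain ⟨he, hα, hβ⟩ := posZ2_cross_rows he he' fun hle => hT.not_le_of_le (by omega)
    exact ⟨rfl, rfl, by omega, hα, hβ⟩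
  · refine (hne ?_).elim
    suffices p = p' by rw [this]
    rcases le_total p p' with hp | hp
    · have := posZ2_mono (hT.monotone i hp) he he'
      omega
    · have := posZ2_mono (hT.monotone i hp) he' he
      omega

end IsTab2

theorem shared_positive_variable_general (q : ℂˣ) (hq : ∀ n : ℕ, 0 < n → (q : ℂ) ^ n ≠ 1)
    (k : ℕ) (T : Fin 2 → Fin k → BB) (hT : IsTab2 k T) (a : ℂˣ)
    (i i' : Fin 2) (hii : i ≤ i') (p p' : Fin k) (hne : (i, p) ≠ (i', p'))
    (l : Fin 2) (b : ℂˣ)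
    (h1 : 0 < (box q (T i p) (a * q ^ (2 * ((p : ℤ) - (i : ℤ))))) (l, b))
    (h2 : 0 < (box q (T i' p') (a * q ^ (2 * ((p' : ℤ) - (i' : ℤ))))) (l, b)) :
    i = 0 ∧ i' = 1 ∧
      ((p = p' ∧ T i p = BB.b2 ∧ T i' p' = BB.b3' ∧ l = 1)
        ∨ ((p : ℕ) = (p' : ℕ) + 1 ∧ T i p = BB.b1 ∧ T i' p' = BB.b2' ∧ l = 0)
        ∨ ((p' : ℕ) = (p : ℕ) + 1 ∧ T i p = BB.b3 ∧
            (T i' p' = BB.b4 ∨ T i' p' = BB.b4') ∧ l = 0)) := by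
  rcases mem_posZ_of_box_pos h1 with ⟨rfl, x, hx, rfl⟩ | ⟨rfl, e, he, rfl⟩ <;>
    rcases mem_posZ_of_box_pos h2 with ⟨hl, y, hy, hb⟩ | ⟨hl, e', he', hb⟩
  · obtain ⟨hz, hf⟩ :=
      exponents_eq_of_Z1_args_eq hq a (posZ1_snd_lt_three hx) (posZ1_snd_lt_three hy) hb
    obtain ⟨hi, hi', hcases⟩ := hT.shared_Z1_cases hii hne hx hy hz hf
    refine ⟨hi, hi', Or.inr ?_⟩
    rcases hcases with ⟨hpp, hα, hβ⟩ | ⟨hpp, hα, hβ⟩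
    exacts [Or.inl ⟨hpp, hα, hβ, rfl⟩, Or.inr ⟨hpp, hα, hβ, rfl⟩]
  · exact absurd hl (by decide)
  · exact absurd hl (by decide)
  · obtain ⟨hi, hi', hpp, hα, hβ⟩ :=
      hT.shared_Z2_cases hii hne he he' (exponent_eq_of_Z2_args_eq hq a hb)
    exact ⟨hi, hi', Or.inl ⟨hpp, hα, hβ, rfl⟩⟩

/-- Shared positive variables between boxes of a two-row tableau `T ∈ Tab(2,k)`:
if the positive parts of the boxes at positions `(i,p)` and `(i',p')` (with `i ≤ i'`)
share a variable `Z_{l,b}`, then `i` is the first row, `i'` the second, and one of three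
explicit configurations occurs.  (Rows are indexed by `Fin 2`, row `0` being the first
row; `l = 1` corresponds to variables `Z_{2,c}` and `l = 0` to variables `Z_{1,c}`.) -/
theorem shared_positive_variable (q : ℂˣ) (hq : ∀ n : ℕ, 0 < n → (q : ℂ) ^ n ≠ 1)
    (k : ℕ) (hk : 1 ≤ k) (T : Fin 2 → Fin k → BB) (hT : IsTab2 k T) (a : ℂˣ)
    (i i' : Fin 2) (hii : i ≤ i') (p p' : Fin k) (hne : (i, p) ≠ (i', p'))
    (l : Fin 2) (b : ℂˣ)
    (h1 : 0 < (box q (T i p) (a * q ^ (2 * ((p : ℤ) - (i : ℤ))))) (l, b))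
    (h2 : 0 < (box q (T i' p') (a * q ^ (2 * ((p' : ℤ) - (i' : ℤ))))) (l, b)) :
    i = 0 ∧ i' = 1 ∧
      ((p = p' ∧ T i p = BB.b2 ∧ T i' p' = BB.b3' ∧ l = 1)
        ∨ ((p : ℕ) = (p' : ℕ) + 1 ∧ T i p = BB.b1 ∧ T i' p' = BB.b2' ∧ l = 0)
        ∨ ((p' : ℕ) = (p : ℕ) + 1 ∧ T i p = BB.b3 ∧
            (T i' p' = BB.b4 ∨ T i' p' = BB.b4') ∧ l = 0)) :=
  shared_positive_variable_general q hq k T hT a i i' hii p p' hne l b h1 h2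
end
end
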